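/- Define 2×2 matrix-valued functions 𝔘 = −λ·diag(i,−i) + [[0, iψ],[−iφ, 0]] and 𝔙 = 2λ𝔘 + 𝔙₀ with 𝔙₀ = [[−iψφ, −ψ_x],[−φ_x, iψφ]], where ψ, φ are smooth functions of (x,z). Then the zero-curvature equation 𝔘_z − 𝔙_x + 𝔘𝔙 − 𝔙𝔘 = 0 holds identically in the parameter λ ∈ ℂ if and only if ψ and φ satisfy the coupled NLS system i ψ_z + ψ_xx − 2ψ²φ = 0 and i φ_z − φ_xx + 2ψφ² = 0. -/

import Mathlib

open Complex Matrix

/-- Partial derivative in x. -/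
noncomputable def px (f : ℝ → ℝ → ℂ) (x z : ℝ) : ℂ :=
  deriv (fun x' => f x' z) x

/-- Partial derivative in z. -/
noncomputable def pz (f : ℝ → ℝ → ℂ) (x z : ℝ) : ℂ :=
  deriv (fun z' => f x z') z

/-- Entrywise partial derivative in x of a matrix-valued function. -/
noncomputable def Dx (M : ℝ → ℝ → Matrix (Fin 2) (Fin 2) ℂ) (x z : ℝ) :
    Matrix (Fin 2) (Fin 2) ℂ :=
  Matrix.of fun i j => deriv (fun x' => M x' z i j) x

/-- Entrywise partial derivative in z of a matrix-valued function. -/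
noncomputable def Dz (M : ℝ → ℝ → Matrix (Fin 2) (Fin 2) ℂ) (x z : ℝ) :
    Matrix (Fin 2) (Fin 2) ℂ :=
  Matrix.of fun i j => deriv (fun z' => M x z' i j) z

theorem zero_curvature_iff_coupled_nls
    (ψ φ : ℝ → ℝ → ℂ)
    (hψ : ContDiff ℝ (⊤ : ℕ∞) (fun p : ℝ × ℝ => ψ p.1 p.2))
    (hφ : ContDiff ℝ (⊤ : ℕ∞) (fun p : ℝ × ℝ => φ p.1 p.2))
    (𝔘 : ℂ → ℝ → ℝ → Matrix (Fin 2) (Fin 2) ℂ)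
    (h𝔘 : ∀ lam x z, 𝔘 lam x z =
      (-lam) • !![(I : ℂ), 0; 0, -I] + !![0, I * ψ x z; -I * φ x z, 0])
    (𝔙₀ : ℝ → ℝ → Matrix (Fin 2) (Fin 2) ℂ)
    (h𝔙₀ : ∀ x z, 𝔙₀ x z =
      !![-I * ψ x z * φ x z, -(px ψ x z); -(px φ x z), I * ψ x z * φ x z])
    (𝔙 : ℂ → ℝ → ℝ → Matrix (Fin 2) (Fin 2) ℂ)
    (h𝔙 : ∀ lam x z, 𝔙 lam x z = (2 * lam) • 𝔘 lam x z + 𝔙₀ x z) :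
    (∀ lam x z, Dz (𝔘 lam) x z - Dx (𝔙 lam) x z
        + 𝔘 lam x z * 𝔙 lam x z - 𝔙 lam x z * 𝔘 lam x z = 0) ↔
    ((∀ x z, I * pz ψ x z + px (px ψ) x z - 2 * (ψ x z)^2 * φ x z = 0) ∧
     (∀ x z, I * pz φ x z - px (px φ) x z + 2 * ψ x z * (φ x z)^2 = 0)) := by
  -- 1-variable smoothness
  have hψ1 : ∀ z, ContDiff ℝ (⊤ : ℕ∞) (fun x => ψ x z) := fun z =>
    hψ.comp (contDiff_id.prodMk contDiff_const)
  have hψ2 : ∀ x, ContDiff ℝ (⊤ : ℕ∞) (fun z => ψ x z) := fun x =>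
    hψ.comp (contDiff_const.prodMk contDiff_id)
  have hφ1 : ∀ z, ContDiff ℝ (⊤ : ℕ∞) (fun x => φ x z) := fun z =>
    hφ.comp (contDiff_id.prodMk contDiff_const)
  have hφ2 : ∀ x, ContDiff ℝ (⊤ : ℕ∞) (fun z => φ x z) := fun x =>
    hφ.comp (contDiff_const.prodMk contDiff_id)
  -- derivative facts
  have dxψ : ∀ x z, HasDerivAt (fun x' => ψ x' z) (px ψ x z) x := fun x z =>
    ((hψ1 z).differentiable (by simp) x).hasDerivAt
  have dzψ : ∀ x z, HasDerivAt (fun z' => ψ x z') (pz ψ x z) z := fun x z =>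
    ((hψ2 x).differentiable (by simp) z).hasDerivAt
  have dxφ : ∀ x z, HasDerivAt (fun x' => φ x' z) (px φ x z) x := fun x z =>
    ((hφ1 z).differentiable (by simp) x).hasDerivAt
  have dzφ : ∀ x z, HasDerivAt (fun z' => φ x z') (pz φ x z) z := fun x z =>
    ((hφ2 x).differentiable (by simp) z).hasDerivAt
  have dxxψ : ∀ x z, HasDerivAt (fun x' => px ψ x' z) (px (px ψ) x z) x := fun x z =>
    (((contDiff_infty_iff_deriv.mp ((hψ1 z).of_le (by simp))).2.differentiable (by simp)) x).hasDerivAt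
  have dxxφ : ∀ x z, HasDerivAt (fun x' => px φ x' z) (px (px φ) x z) x := fun x z =>
    (((contDiff_infty_iff_deriv.mp ((hφ1 z).of_le (by simp))).2.differentiable (by simp)) x).hasDerivAt
  -- explicit entries
  have hU : ∀ lam x z, 𝔘 lam x z =
      !![-lam * I, I * ψ x z; -I * φ x z, lam * I] := by
    intro lam x z
    rw [h𝔘]
    ext i j
    fin_cases i <;> fin_cases j <;> simp [smul_eq_mul] <;> ring
  have hV : ∀ lam x z, 𝔙 lam x z =
      !![2 * lam * (-lam * I) + -I * ψ x z * φ x z,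
         2 * lam * (I * ψ x z) + -(px ψ x z);
         2 * lam * (-I * φ x z) + -(px φ x z),
         2 * lam * (lam * I) + I * ψ x z * φ x z] := by
    intro lam x z
    rw [h𝔙, hU, h𝔙₀]
    ext i j
    fin_cases i <;> fin_cases j <;> simp [smul_eq_mul] <;> ring
  -- derivative matrices
  have hDzU : ∀ lam x z, Dz (𝔘 lam) x z =
      !![0, I * pz ψ x z; -I * pz φ x z, 0] := by
    intro lam x z
    ext i j
    simp only [Dz, Matrix.of_apply]
    have : (fun z' => 𝔘 lam x z' i j) =
        (fun z' => !![-lam * I, I * ψ x z'; -I * φ x z', lam * I] i j) := by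
      funext z'; rw [hU]
    rw [this]
    fin_cases i <;> fin_cases j <;> simp only [Matrix.cons_val', Matrix.cons_val_zero,
      Matrix.cons_val_one, Matrix.head_cons, Matrix.empty_val', Matrix.cons_val_fin_one,
      Matrix.head_fin_const]
    · simp
    · exact ((dzψ x z).const_mul I).deriv
    · exact ((dzφ x z).const_mul (-I)).deriv
    · simp
  have hDxV : ∀ lam x z, Dx (𝔙 lam) x z =
      !![-I * (px ψ x z * φ x z + ψ x z * px φ x z),
         2 * lam * (I * px ψ x z) + -(px (px ψ) x z);
         2 * lam * (-I * px φ x z) + -(px (px φ) x z),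
         I * (px ψ x z * φ x z + ψ x z * px φ x z)] := by
    intro lam x z
    ext i j
    simp only [Dx, Matrix.of_apply]
    have : (fun x' => 𝔙 lam x' z i j) =
        (fun x' => !![2 * lam * (-lam * I) + -I * ψ x' z * φ x' z,
            2 * lam * (I * ψ x' z) + -(px ψ x' z);
            2 * lam * (-I * φ x' z) + -(px φ x' z),
            2 * lam * (lam * I) + I * ψ x' z * φ x' z] i j) := by
      funext x'; rw [hV]
    rw [this]
    fin_cases i <;> fin_cases j <;> simp only [Matrix.cons_val', Matrix.cons_val_zero,
      Matrix.cons_val_one, Matrix.head_cons, Matrix.empty_val', Matrix.cons_val_fin_one,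
      Matrix.head_fin_const]
    · have h1 : HasDerivAt (fun x' => 2 * lam * (-lam * I) + -I * ψ x' z * φ x' z)
          (-I * (px ψ x z * φ x z + ψ x z * px φ x z)) x := by
        have := (((dxψ x z).const_mul (-I)).mul (dxφ x z)).const_add (2 * lam * (-lam * I))
        exact this.congr_deriv (by ring)
      exact h1.deriv
    · have h1 : HasDerivAt (fun x' => 2 * lam * (I * ψ x' z) + -(px ψ x' z))
          (2 * lam * (I * px ψ x z) + -(px (px ψ) x z)) x :=
        (((dxψ x z).const_mul I).const_mul (2 * lam)).add (dxxψ x z).neg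
      exact h1.deriv
    · have h1 : HasDerivAt (fun x' => 2 * lam * (-I * φ x' z) + -(px φ x' z))
          (2 * lam * (-I * px φ x z) + -(px (px φ) x z)) x :=
        (((dxφ x z).const_mul (-I)).const_mul (2 * lam)).add (dxxφ x z).neg
      exact h1.deriv
    · have h1 : HasDerivAt (fun x' => 2 * lam * (lam * I) + I * ψ x' z * φ x' z)
          (I * (px ψ x z * φ x z + ψ x z * px φ x z)) x := by
        have := (((dxψ x z).const_mul I).mul (dxφ x z)).const_add (2 * lam * (lam * I))
        exact this.congr_deriv (by ring)
      exact h1.deriv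
  -- the key reduction
  have key : ∀ lam x z, Dz (𝔘 lam) x z - Dx (𝔙 lam) x z
        + 𝔘 lam x z * 𝔙 lam x z - 𝔙 lam x z * 𝔘 lam x z =
      !![0, I * pz ψ x z + px (px ψ) x z - 2 * (ψ x z)^2 * φ x z;
         -(I * pz φ x z - px (px φ) x z + 2 * ψ x z * (φ x z)^2), 0] := by
    intro lam x z
    rw [hDzU, hDxV, hU, hV, Matrix.mul_fin_two, Matrix.mul_fin_two]
    ext i j
    fin_cases i <;> fin_cases j <;> simp <;> ring_nf <;>
      first
      | rfl
      | (simp [Complex.I_sq]; ring)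
    done
  constructor
  · intro h
    constructor
    · intro x z
      have h0 := (h 0 x z)
      rw [key] at h0
      have := congrFun (congrFun h0 0) 1
      simpa using this
    · intro x z
      have h0 := (h 0 x z)
      rw [key] at h0
      have := congrFun (congrFun h0 1) 0
      simp at this
      linear_combination -this
  · intro h lam x z
    rw [key, h.1 x z, h.2 x z]
    ext i j
    fin_cases i <;> fin_cases j <;> simp
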